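/- Resolved futures stay resolved: if ⟨C,h⟩ → ⟨C',h'⟩ is any global transition of the ABS subset semantics and h(l) ≠ ⊥ for a future reference l, then h'(l) = h(l). That is, once a future is resolved to a value, no rule ever modifies it. -/
import Mathlib


/-- Runtime values: integers, object references, future references. -/
inductive Val where
  | int : Int → Val
  | obj : Nat → Val
  | fut : Nat → Val
deriving DecidableEq

/-- Side-effect free expressions. -/
inductive Expr where
  | attr : Nat → Expr
  | param : Nat → Expr
  | val : Val → Expr
  | add : Expr → Expr → Expr
  | sub : Expr → Expr → Expr
deriving DecidableEq

/-- Boolean guards. -/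
inductive BExpr where
  | band : BExpr → BExpr → BExpr
  | bor : BExpr → BExpr → BExpr
  | bnot : BExpr → BExpr
  | beq : Expr → Expr → BExpr
deriving DecidableEq

/-- Statements of the ABS subset.  A `ret z m` with `m = none` is an
unmarked `return z`; `m = some none` is `return* z` (asynchronous mark);
`m = some (some w)` is `return^w z` (write-back mark). -/
inductive Stmt where
  | assign : Nat → Expr → Stmt                  -- x := E
  | newObj : Nat → Stmt                         -- x := new
  | get : Nat → Nat → Stmt                      -- x := f.get
  | async : Nat → Nat → Nat → List Nat → Stmt   -- f := x!m(ȳ)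
  | sync : Nat → Nat → List Nat → Stmt          -- x := m(ȳ)
  | await : Nat → Stmt                          -- await f
  | skip : Stmt
  | ret : Nat → Option (Option Nat) → Stmt      -- return z (possibly marked)
  | seq : Stmt → Stmt → Stmt
  | ite : BExpr → Stmt → Stmt → Stmt
  | while : BExpr → Stmt → Stmt
deriving DecidableEq

/-- The marking function  Ŝ^s : replace the final `return z` by `return^s z`.
`s = none` is the asynchronous mark `*`; `s = some w` is the write-back mark `w`. -/
def mark (s : Option Nat) : Stmt → Stmt
  | .seq s1 s2 => .seq s1 (mark s s2)
  | .ret z none => .ret z (some s)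
  | t => t

/-- Substitution of method parameters by values. -/
def substE (τ : Nat → Option Val) : Expr → Expr
  | .param r => match τ r with | some v => .val v | none => .param r
  | .add a b => .add (substE τ a) (substE τ b)
  | .sub a b => .sub (substE τ a) (substE τ b)
  | e => e

def substB (τ : Nat → Option Val) : BExpr → BExpr
  | .band a b => .band (substB τ a) (substB τ b)
  | .bor a b => .bor (substB τ a) (substB τ b)
  | .bnot a => .bnot (substB τ a)
  | .beq a b => .beq (substE τ a) (substE τ b)

def subst (τ : Nat → Option Val) : Stmt → Stmt
  | .assign x e => .assign x (substE τ e)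
  | .seq a b => .seq (subst τ a) (subst τ b)
  | .ite b s1 s2 => .ite (substB τ b) (subst τ s1) (subst τ s2)
  | .while b s => .while (substB τ b) (subst τ s)
  | s => s

/-- The global heap: a counter for fresh references, the local stores of
the existing objects, and the values of the existing futures
(`some none` = unresolved future `⊥`). -/
structure Heap where
  count : Nat
  objs : Nat → Option (Nat → Val)
  futs : Nat → Option (Option Val)

def Heap.store (h : Heap) (n : Nat) : Nat → Val := (h.objs n).getD (fun _ => .int 0)

def Heap.setAttr (h : Heap) (n x : Nat) (v : Val) : Heap :=
  { h with objs := fun m => if m = n then some (Function.update (h.store n) x v) else h.objs m }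

def Heap.allocObj (h : Heap) : Heap :=
  { h with count := h.count + 1,
           objs := fun m => if m = h.count then some (fun _ => .int 0) else h.objs m }

def Heap.setFut (h : Heap) (l : Nat) (v : Option Val) : Heap :=
  { h with futs := fun m => if m = l then some v else h.futs m }

def Heap.allocFut (h : Heap) : Heap :=
  { h with count := h.count + 1,
           futs := fun m => if m = h.count then some none else h.futs m }

def Val.toInt : Val → Int
  | .int i => i
  | _ => 0

def evalE (σ : Nat → Val) : Expr → Val
  | .attr x => σ x
  | .param _ => .int 0
  | .val v => v
  | .add a b => .int ((evalE σ a).toInt + (evalE σ b).toInt)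
  | .sub a b => .int ((evalE σ a).toInt - (evalE σ b).toInt)

def evalB (σ : Nat → Val) : BExpr → Bool
  | .band a b => evalB σ a && evalB σ b
  | .bor a b => evalB σ a || evalB σ b
  | .bnot a => ! evalB σ a
  | .beq a b => decide (evalE σ a = evalE σ b)

/-- A closure: statement together with its destiny future. -/
abbrev Closure := Stmt × Nat

/-- A program: a method table mapping method names to formal parameters
and body. -/
abbrev Prog := Nat → Option (List Nat × Stmt)

/-- Substitution [w̄ ↦ v̄]. -/
def mkSubst (ws : List Nat) (vs : List Val) : Nat → Option Val :=
  fun r => (ws.zip vs).lookup r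

/-- Names of the local rules. -/
inductive RuleTag where
  | assign | new | get | awaitI | awaitII | async | sync | retA | retS | ctrl
deriving DecidableEq

/-- Step decorations: either internal (τ) or an asynchronous-call message
`d.m(l',v̄)`. -/
inductive MsgLabel where
  | tau : MsgLabel
  | msg : Nat → Nat → Nat → List Val → MsgLabel
deriving DecidableEq

/-- Local semantics of Fig. 5 (plus the standard rules for `skip`,
sequencing, `if` and `while`). `LStep D n Q h t lab Q' h'` means that
object `n` performs one step, executing the head statement of its active
process, by the rule named `t` with decoration `lab`. -/
inductive LStep (D : Prog) (n : Nat) :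
    List Closure → Heap → RuleTag → MsgLabel → List Closure → Heap → Prop where
  | assign {x e S l q h} :
      LStep D n ((.seq (.assign x e) S, l) :: q) h .assign .tau
        ((S, l) :: q) (h.setAttr n x (evalE (h.store n) e))
  | newObj {x S l q h} :
      LStep D n ((.seq (.newObj x) S, l) :: q) h .new .tau
        ((S, l) :: q) ((h.setAttr n x (.obj h.count)).allocObj)
  | get {x f r v S l q h} :
      h.store n f = .fut r →
      h.futs r = some (some v) →
      LStep D n ((.seq (.get x f) S, l) :: q) h .get .tau
        ((S, l) :: q) (h.setAttr n x v)
  | awaitI {f r v S l q h} :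
      h.store n f = .fut r →
      h.futs r = some (some v) →
      LStep D n ((.seq (.await f) S, l) :: q) h .awaitI .tau ((S, l) :: q) h
  | awaitII {f r S l q h} :
      h.store n f = .fut r →
      h.futs r = some none →
      LStep D n ((.seq (.await f) S, l) :: q) h .awaitII .tau
        (q ++ [(.seq (.await f) S, l)]) h
  | async {f x m ys d S l q h} :
      h.store n x = .obj d →
      LStep D n ((.seq (.async f x m ys) S, l) :: q) h .async
        (.msg d m h.count (ys.map (h.store n)))
        ((S, l) :: q) ((h.setAttr n f (.fut h.count)).allocFut)
  | sync {x m ys ws Sm S l q h} :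
      D m = some (ws, Sm) →
      LStep D n ((.seq (.sync x m ys) S, l) :: q) h .sync .tau
        ((.seq (mark (some x) (subst (mkSubst ws (ys.map (h.store n))) Sm)) S, l) :: q) h
  | retA {z S l q h} :
      LStep D n ((.seq (.ret z (some none)) S, l) :: q) h .retA .tau
        q (h.setFut l (some (h.store n z)))
  | retS {z w S l q h} :
      LStep D n ((.seq (.ret z (some (some w))) S, l) :: q) h .retS .tau
        ((S, l) :: q) (h.setAttr n w (h.store n z))
  | skip {S l q h} :
      LStep D n ((.seq .skip S, l) :: q) h .ctrl .tau ((S, l) :: q) h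
  | ite {b s1 s2 S l q h} :
      LStep D n ((.seq (.ite b s1 s2) S, l) :: q) h .ctrl .tau
        (((if evalB (h.store n) b then Stmt.seq s1 S else Stmt.seq s2 S), l) :: q) h
  | whileLoop {b s S l q h} :
      LStep D n ((.seq (.while b s) S, l) :: q) h .ctrl .tau
        (((if evalB (h.store n) b then Stmt.seq s (.seq (.while b s) S) else S), l) :: q) h
  | seqAssoc {s1 s2 s3 l q h} :
      LStep D n ((.seq (.seq s1 s2) s3, l) :: q) h .ctrl .tau
        ((.seq s1 (.seq s2 s3), l) :: q) h

/-- The atomic statement at the head of the active process of a queue. -/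
def headAtom : List Closure → Option Stmt
  | (Stmt.seq a _, _) :: _ => some a
  | _ => none

/-- Global semantics of Fig. 6.  A configuration is a family of process
queues `C` together with a heap.  Steps are decorated with the executing
object and the executed statement. -/
inductive GStep (D : Prog) :
    (Nat → List Closure) → Heap → Nat → Stmt → (Nat → List Closure) → Heap → Prop where
  | internal {C h n t Q' h' S} :
      t ≠ RuleTag.async →
      LStep D n (C n) h t .tau Q' h' →
      headAtom (C n) = some S →
      GStep D C h n S (Function.update C n Q') h'
  | message {C h n Q' h' d m l' vs ws Sm S} :
      LStep D n (C n) h .async (.msg d m l' vs) Q' h' →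
      D m = some (ws, Sm) →
      headAtom (C n) = some S →
      GStep D C h n S
        (Function.update (Function.update C n Q') d
          ((Function.update C n Q' d) ++
            [(Stmt.seq (mark none (subst (mkSubst ws vs) Sm)) Stmt.skip, l')]))
        h'

/-- Invariant: the destiny future of every pending process is still
unresolved (each future is the destiny of at most one process and is
resolved exactly once, by that process). -/
def DestinyInv (C : Nat → List Closure) (h : Heap) : Prop :=
  ∀ n, ∀ cl ∈ C n, h.futs cl.2 = some none

/-- resolved futures stay resolved: no global transition
modifies the value of a future that is already resolved. -/
theorem resolved_futures_stable {D : Prog} {C C' : Nat → List Closure}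
    {h h' : Heap} {o : Nat} {S : Stmt}
    (hbound : ∀ l, h.futs l ≠ none → l < h.count)
    (hinv : DestinyInv C h)
    (hstep : GStep D C h o S C' h') :
    ∀ l v, h.futs l = some (some v) → h'.futs l = some (some v) := by
  intro l v hl
  have key : ∀ Q h1 t lab Q' h1',
      LStep D o Q h1 t lab Q' h1' → (∀ l', h1.futs l' ≠ none → l' < h1.count) →
      (∀ cl ∈ Q, h1.futs cl.2 = some none) →
      h1.futs l = some (some v) → h1'.futs l = some (some v) := by
    intro Q h1 t lab Q' h1' hls hb hi hv
    cases hls with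
    | assign => exact hv
    | newObj => exact hv
    | get _ _ => exact hv
    | awaitI _ _ => exact hv
    | awaitII _ _ => exact hv
    | @async f x m ys d S' ld q _ =>
      simp only [Heap.allocFut, Heap.setAttr, Heap.setFut]
      have : l ≠ h1.count := by
        intro h; exact absurd (hb l (by rw [hv]; simp)) (by omega)
      simp [this]; exact hv
    | sync _ => exact hv
    | @retA z S' ld q _ =>
      have := hi (Stmt.seq (Stmt.ret z (some none)) S', ld) (by simp)
      simp only at this
      have hne : l ≠ ld := by intro h; rw [h, this] at hv; simp at hv
      simp [Heap.setFut, hne]; exact hv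
    | retS => exact hv
    | skip => exact hv
    | ite => exact hv
    | whileLoop => exact hv
    | seqAssoc => exact hv
  cases hstep with
  | internal hne hls hhead => exact key _ _ _ _ _ _ hls hbound (hinv o) hl
  | message hls hD hhead => exact key _ _ _ _ _ _ hls hbound (hinv o) hl
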